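/- Define maps τ₁, τ₂, τ₃ on 6-tuples v = (v₀,…,v₅) of rational numbers by: τ₁ replaces (v₀,v₁) by ((v₂v₄+v₃v₅)/v₁, (v₂v₄+v₃v₅)/v₀) and fixes the other entries; τ₂ replaces (v₂,v₃) by ((v₁v₄+v₀v₅)/v₃, (v₁v₄+v₀v₅)/v₂); τ₃ replaces (v₄,v₅) by ((v₀v₂+v₁v₃)/v₅, (v₀v₂+v₁v₃)/v₄). Then for every finite word w = (a₁,…,aₙ) with letters in {1,2,3}, every coordinate of the tuple obtained by applying τ₍a₁₎, …, τ₍aₙ₎ in succession to the all-ones tuple (1,1,1,1,1,1) is equal to 2^k for some natural number k. -/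
import Mathlib


noncomputable section

/-- τ₁ over ℚ : replaces (v₀, v₁) by ((v₂v₄+v₃v₅)/v₁, (v₂v₄+v₃v₅)/v₀). -/
def qtau1 (v : Fin 6 → ℚ) : Fin 6 → ℚ := fun k =>
  if k = 0 then (v 2 * v 4 + v 3 * v 5) / v 1
  else if k = 1 then (v 2 * v 4 + v 3 * v 5) / v 0
  else v k

/-- τ₂ over ℚ : replaces (v₂, v₃) by ((v₁v₄+v₀v₅)/v₃, (v₁v₄+v₀v₅)/v₂). -/
def qtau2 (v : Fin 6 → ℚ) : Fin 6 → ℚ := fun k =>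
  if k = 2 then (v 1 * v 4 + v 0 * v 5) / v 3
  else if k = 3 then (v 1 * v 4 + v 0 * v 5) / v 2
  else v k

/-- τ₃ over ℚ : replaces (v₄, v₅) by ((v₀v₂+v₁v₃)/v₅, (v₀v₂+v₁v₃)/v₄). -/
def qtau3 (v : Fin 6 → ℚ) : Fin 6 → ℚ := fun k =>
  if k = 4 then (v 0 * v 2 + v 1 * v 3) / v 5
  else if k = 5 then (v 0 * v 2 + v 1 * v 3) / v 4
  else v k

/-- τ indexed by Fin 3: `qtau i` is τ_{i+1}. -/
def qtau : Fin 3 → (Fin 6 → ℚ) → (Fin 6 → ℚ)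
  | 0 => qtau1
  | 1 => qtau2
  | 2 => qtau3

/-- Apply the maps τ₍a₁₎, …, τ₍aₙ₎ along the word `w` in left-to-right order. -/
def applyWordQ (w : List (Fin 3)) (v : Fin 6 → ℚ) : Fin 6 → ℚ :=
  w.foldl (fun u a => qtau a u) v

/-- The pattern state. -/
def pat (a c e : ℤ) : Fin 6 → ℚ := ![2^a, 2^a, 2^c, 2^c, 2^e, 2^e]

def Qf (a c e : ℤ) : ℤ := a^2+c^2+e^2-a*c-c*e-e*a-a-c-e

lemma Qf_bound {a c e : ℤ} (ha : 0 ≤ a)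
    (hQ : Qf a c e = 0) : a ≤ 1 + c + e := by
  by_contra h
  push_neg at h
  unfold Qf at hQ
  nlinarith [sq_nonneg (c - e),
    mul_nonneg ha (by linarith : (0:ℤ) ≤ a - c - e - 2)]

lemma sum_div (a c e : ℤ) :
    ((2:ℚ)^c * 2^e + 2^c * 2^e) / 2^a = 2^(1+c+e-a) := by
  have h2 : (2:ℚ) ≠ 0 := by norm_num
  rw [← two_mul, show (2:ℚ) * (2^c*2^e) = 2^(1+c+e) by
    rw [zpow_add₀ h2, zpow_add₀ h2, zpow_one]; ring,
    ← zpow_sub₀ h2]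

/-- The invariant predicate. -/
def Good (v : Fin 6 → ℚ) : Prop :=
  ∃ a c e : ℤ, 0 ≤ a ∧ 0 ≤ c ∧ 0 ≤ e ∧ Qf a c e = 0 ∧ v = pat a c e

lemma good_tau1 {v : Fin 6 → ℚ} (h : Good v) : Good (qtau1 v) := by
  obtain ⟨a, c, e, ha, hc, he, hQ, rfl⟩ := h
  refine ⟨1+c+e-a, c, e, ?_, hc, he, ?_, ?_⟩
  · have := Qf_bound ha hQ; linarith
  · unfold Qf at hQ ⊢; nlinarith [hQ]
  · funext k
    fin_cases k <;>
      simp [qtau1, pat, Matrix.cons_val_zero, Matrix.cons_val_one, Matrix.cons_val_succ, Matrix.head_cons] <;>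
      first | rfl | exact sum_div a c e

lemma good_tau2 {v : Fin 6 → ℚ} (h : Good v) : Good (qtau2 v) := by
  obtain ⟨a, c, e, ha, hc, he, hQ, rfl⟩ := h
  have hQ' : Qf c a e = 0 := by unfold Qf at hQ ⊢; linarith [hQ]
  refine ⟨a, 1+a+e-c, e, ha, ?_, he, ?_, ?_⟩
  · have := Qf_bound hc hQ'; linarith
  · unfold Qf at hQ ⊢; nlinarith [hQ]
  · funext k
    fin_cases k <;>
      simp [qtau2, pat, Matrix.cons_val_zero, Matrix.cons_val_one, Matrix.cons_val_succ, Matrix.head_cons] <;>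
      first | rfl | exact sum_div c a e

lemma good_tau3 {v : Fin 6 → ℚ} (h : Good v) : Good (qtau3 v) := by
  obtain ⟨a, c, e, ha, hc, he, hQ, rfl⟩ := h
  have hQ' : Qf e a c = 0 := by unfold Qf at hQ ⊢; linarith [hQ]
  refine ⟨a, c, 1+a+c-e, ha, hc, ?_, ?_, ?_⟩
  · have := Qf_bound he hQ'; linarith
  · unfold Qf at hQ ⊢; nlinarith [hQ]
  · funext k
    fin_cases k <;>
      simp [qtau3, pat, Matrix.cons_val_zero, Matrix.cons_val_one, Matrix.cons_val_succ, Matrix.head_cons] <;>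
      first | rfl | exact sum_div e a c

lemma good_tau (i : Fin 3) {v : Fin 6 → ℚ} (h : Good v) : Good (qtau i v) := by
  fin_cases i
  · exact good_tau1 h
  · exact good_tau2 h
  · exact good_tau3 h

lemma good_word (w : List (Fin 3)) {v : Fin 6 → ℚ} (h : Good v) :
    Good (applyWordQ w v) := by
  induction w generalizing v with
  | nil => exact h
  | cons a w ih => exact ih (good_tau a h)

/-- Specializing at x₀ = ⋯ = x₅ = 1, every entry produced by a τ-mutation
sequence is a power of 2: every Aztec castle has 2^k perfect matchings. -/
theorem entries_are_powers_of_two (w : List (Fin 3)) (i : Fin 6) :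
    ∃ k : ℕ, applyWordQ w (fun _ => 1) i = 2 ^ k := by
  have h0 : Good (fun _ => (1:ℚ)) := by
    refine ⟨0, 0, 0, le_refl _, le_refl _, le_refl _, by unfold Qf; ring, ?_⟩
    funext k; fin_cases k <;> rfl
  obtain ⟨a, c, e, ha, hc, he, hQ, hv⟩ := good_word w h0
  rw [hv]
  have key : ∀ x : ℤ, 0 ≤ x → ∃ k : ℕ, (2:ℚ)^x = 2^k := fun x hx =>
    ⟨x.toNat, by rw [← zpow_natCast, Int.toNat_of_nonneg hx]⟩
  fin_cases i <;> simp only [pat, Matrix.cons_val_zero, Matrix.cons_val_one, Matrix.head_cons] <;>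
    first
      | exact key a ha
      | exact key c hc
      | exact key e he
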